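/- If every element a of the center of A satisfying t(a) = a is a real scalar multiple of the unit 1, then A is a simple ring: its only two-sided ideals are 0 and A. -/

import Mathlib

/-!
Let `I` be a two-sided ideal and `J` its `B`-orthogonal complement. Since `B` is anisotropic and
right multiplication by `a` has adjoint right multiplication by `t a`, `J` is a right ideal with
`I ∩ J = 0`, so `J * I ⊆ I ∩ J = 0`. Writing `1 = e + f` with `e ∈ I`, `f ∈ J` makes `e` a left unit
of `I`. Moreover `I = J^⊥` is `t`-stable, so `t e` is a right unit of `I`; hence `t e = e` is a
two-sided unit of `I`, thus a central `t`-invariant idempotent, i.e. `e = 0` or `e = 1`.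
-/

section Ring

variable {A : Type*} [Ring A]

lemma left_unit_eq_right_unit {S : Set A} {e e' : A} (he : e ∈ S) (he' : e' ∈ S)
    (hleft : ∀ x ∈ S, e * x = x) (hright : ∀ x ∈ S, x * e' = x) : e = e' :=
  (hright e he).symm.trans (hleft e' he')

lemma mul_comm_of_unit_of_mem_ideal {S : Set A} (hS : ∀ x ∈ S, ∀ a : A, a * x ∈ S ∧ x * a ∈ S)
    {e : A} (he : e ∈ S) (hleft : ∀ x ∈ S, e * x = x) (hright : ∀ x ∈ S, x * e = x) (b : A) :
    e * b = b * e :=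
  calc e * b = e * b * e := (hright _ (hS e he b).2).symm
    _ = b * e := by rw [mul_assoc, hleft _ (hS e he b).1]

lemma mul_map_eq_of_left_unit {t : A → A} (ht_invol : ∀ x, t (t x) = x)
    (ht_mul : ∀ x y, t (x * y) = t y * t x) {S : Set A} (hS : ∀ x ∈ S, t x ∈ S) {e : A}
    (hleft : ∀ x ∈ S, e * x = x) : ∀ x ∈ S, x * t e = x := by
  intro x hx
  rw [← ht_invol (x * t e), ht_mul, ht_invol, hleft _ (hS x hx), ht_invol]

lemma AddSubgroup.eq_bot_or_eq_top_of_left_unit {I : AddSubgroup A}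
    (hI : ∀ x ∈ I, ∀ a : A, a * x ∈ I ∧ x * a ∈ I) {e : A} (he : e ∈ I)
    (hleft : ∀ x ∈ I, e * x = x) (he₀₁ : e = 0 ∨ e = 1) : I = ⊥ ∨ I = ⊤ := by
  rcases he₀₁ with rfl | rfl
  · exact .inl <| (eq_bot_iff_forall I).2 fun x hx => by rw [← hleft x hx, zero_mul]
  · exact .inr <| (eq_top_iff' I).2 fun x => by simpa using (hI 1 he x).1

end Ring

lemma smul_one_eq_zero_or_eq_one {K A : Type*} [Field K] [Ring A] [Algebra K A] {r : K}
    (h : IsIdempotentElem (r • (1 : A))) : r • (1 : A) = 0 ∨ r • (1 : A) = 1 := by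
  nontriviality A
  rw [← Algebra.algebraMap_eq_smul_one] at h ⊢
  have hr : IsIdempotentElem r := (algebraMap K A).injective (by rw [map_mul]; exact h)
  rcases IsIdempotentElem.iff_eq_zero_or_one.1 hr with rfl | rfl <;> simp

namespace LinearMap.BilinForm

lemma nondegenerate_of_anisotropic {R M : Type*} [CommRing R] [AddCommGroup M] [Module R M]
    {B : LinearMap.BilinForm R M} (hB : ∀ x, B x x = 0 → x = 0) : B.Nondegenerate :=
  ⟨fun x hx => hB x (hx x), fun y hy => hB y (hy y)⟩

lemma disjoint_orthogonal_of_anisotropic {R M : Type*} [CommRing R] [AddCommGroup M]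
    [Module R M] {B : LinearMap.BilinForm R M} (hB : ∀ x, B x x = 0 → x = 0)
    (W : Submodule R M) : Disjoint W (B.orthogonal W) :=
  Submodule.disjoint_def.2 fun x hx hx' => hB x (hx' x hx)

variable {K A : Type*} [Ring A] {t : A → A}

section CommRing

variable [CommRing K] [Algebra K A] {B : LinearMap.BilinForm K A}

lemma apply_mul_eq_apply_mul_map (ht_invol : ∀ x, t (t x) = x)
    (ht_mul : ∀ x y, t (x * y) = t y * t x) (hB_adj : ∀ x y, B x y = B (x * t y) 1)
    (x a y : A) : B (x * a) y = B x (y * t a) := by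
  rw [hB_adj, hB_adj x, ht_mul, ht_invol, mul_assoc]

lemma mul_mem_orthogonal (ht_invol : ∀ x, t (t x) = x) (ht_mul : ∀ x y, t (x * y) = t y * t x)
    (hB_adj : ∀ x y, B x y = B (x * t y) 1) {W : Submodule K A}
    (hW : ∀ x ∈ W, ∀ a : A, x * a ∈ W) {y : A} (hy : y ∈ B.orthogonal W) (a : A) :
    y * a ∈ B.orthogonal W := by
  intro x hx
  change B x (y * a) = 0
  rw [← ht_invol a, ← apply_mul_eq_apply_mul_map ht_invol ht_mul hB_adj]
  exact hy _ (hW x hx _)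

lemma mul_eq_zero_of_mem_orthogonal (ht_invol : ∀ x, t (t x) = x)
    (ht_mul : ∀ x y, t (x * y) = t y * t x) (hB_adj : ∀ x y, B x y = B (x * t y) 1)
    (hB : ∀ x, B x x = 0 → x = 0) {W : Submodule K A}
    (hW : ∀ x ∈ W, ∀ a : A, a * x ∈ W ∧ x * a ∈ W) {x y : A} (hy : y ∈ B.orthogonal W)
    (hx : x ∈ W) : y * x = 0 :=
  Submodule.disjoint_def.1 (disjoint_orthogonal_of_anisotropic hB W) _ (hW x hx y).1
    (mul_mem_orthogonal ht_invol ht_mul hB_adj (fun x hx a => (hW x hx a).2) hy x)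

end CommRing

variable [Field K] [Algebra K A] {B : LinearMap.BilinForm K A}

lemma exists_left_unit [FiniteDimensional K A] (ht_invol : ∀ x, t (t x) = x)
    (ht_mul : ∀ x y, t (x * y) = t y * t x) (hB_adj : ∀ x y, B x y = B (x * t y) 1)
    (hB_refl : B.IsRefl) (hB : ∀ x, B x x = 0 → x = 0) {W : Submodule K A}
    (hW : ∀ x ∈ W, ∀ a : A, a * x ∈ W ∧ x * a ∈ W) : ∃ e ∈ W, ∀ x ∈ W, e * x = x := by
  have hcompl : IsCompl W (B.orthogonal W) :=
    (isCompl_orthogonal_iff_disjoint hB_refl).2 (disjoint_orthogonal_of_anisotropic hB W)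
  obtain ⟨e, he, f, hf, hef⟩ := Submodule.mem_sup.1 (hcompl.sup_eq_top ▸ Submodule.mem_top (x := 1))
  refine ⟨e, he, fun x hx => ?_⟩
  calc e * x = (e + f) * x := by
        rw [add_mul, mul_eq_zero_of_mem_orthogonal ht_invol ht_mul hB_adj hB hW hf hx, add_zero]
    _ = x := by rw [hef, one_mul]

lemma map_mem_of_mem [FiniteDimensional K A] (ht_invol : ∀ x, t (t x) = x)
    (ht_mul : ∀ x y, t (x * y) = t y * t x) (hB_adj : ∀ x y, B x y = B (x * t y) 1)
    (hB_refl : B.IsRefl) (hB : ∀ x, B x x = 0 → x = 0) {W : Submodule K A}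
    (hW : ∀ x ∈ W, ∀ a : A, a * x ∈ W ∧ x * a ∈ W) {x : A} (hx : x ∈ W) : t x ∈ W := by
  rw [← orthogonal_orthogonal (nondegenerate_of_anisotropic hB) hB_refl W]
  intro y hy
  change B y (t x) = 0
  rw [hB_adj, ht_invol, mul_eq_zero_of_mem_orthogonal ht_invol ht_mul hB_adj hB hW hy hx,
    map_zero, LinearMap.zero_apply]

end LinearMap.BilinForm

open LinearMap.BilinForm in
theorem simple_of_trivial_invariant_center
    (A : Type) [Ring A] [Algebra ℝ A] [FiniteDimensional ℝ A]
    (t : A →ₗ[ℝ] A) (ht_invol : ∀ x : A, t (t x) = x)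
    (ht_mul : ∀ x y : A, t (x * y) = t y * t x)
    (B : A →ₗ[ℝ] A →ₗ[ℝ] ℝ)
    (hB_symm : ∀ x y : A, B x y = B y x)
    (hB_neg : ∀ x : A, x ≠ 0 → B x x < 0)
    (hB_adj : ∀ x y : A, B x y = B (x * t y) 1)
    (hcenter : ∀ a : A, (∀ b : A, a * b = b * a) → t a = a → ∃ r : ℝ, a = r • (1 : A)) :
    ∀ I : AddSubgroup A, (∀ x ∈ I, ∀ a : A, a * x ∈ I ∧ x * a ∈ I) →
      I = ⊥ ∨ I = ⊤ := by
  intro I hI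
  let W : Submodule ℝ A :=
    { I.toAddSubmonoid with
      smul_mem' := fun r x hx => by simpa [Algebra.smul_def] using (hI x hx (algebraMap ℝ A r)).1 }
  have hB_refl : LinearMap.BilinForm.IsRefl B := fun x y h => by rwa [hB_symm]
  have hB : ∀ x, B x x = 0 → x = 0 := fun x hx => by_contra fun h => (hB_neg x h).ne hx
  have ht_mem : ∀ x ∈ W, t x ∈ W := fun x hx =>
    map_mem_of_mem ht_invol ht_mul hB_adj hB_refl hB (W := W) hI hx
  obtain ⟨e, he, hleft⟩ := exists_left_unit ht_invol ht_mul hB_adj hB_refl hB (W := W) hI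
  have hright := mul_map_eq_of_left_unit ht_invol ht_mul ht_mem hleft
  have hte : t e = e := (left_unit_eq_right_unit he (ht_mem e he) hleft hright).symm
  rw [hte] at hright
  obtain ⟨r, rfl⟩ := hcenter e (mul_comm_of_unit_of_mem_ideal hI he hleft hright) hte
  exact AddSubgroup.eq_bot_or_eq_top_of_left_unit hI he hleft
    (smul_one_eq_zero_or_eq_one (hright _ he))
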